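/- Let ℓ : ℝ → ℝ be continuous, decreasing, and bounded below, with η > 1/2 and global conditional-risk infimum m = inf_α C_η(α). Suppose α₀ > 0 satisfies C_η(α₀) < C_η(0). Then inf { C_η(α) : −α₀ ≤ α ≤ 0 } > m. -/

import Mathlib

/-- The conditional risk `C_η(α) = η ℓ(α) + (1 − η) ℓ(−α)`. -/
noncomputable def Crisk (ℓ : ℝ → ℝ) (η α : ℝ) : ℝ := η * ℓ α + (1 - η) * ℓ (-α)

/-!
A minimiser `a` of `C_η` on the compact interval `[-α₀, 0]` is never a global minimiser. Since
`C_η(a) - C_η(-a) = (2η - 1)(ℓ(a) - ℓ(-a)) ≥ 0`, flipping the sign does not increase the risk,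
and strictly decreases it unless `ℓ(a) = ℓ(-a)`; in that case `ℓ` is constant on `[a, -a]`, so
`C_η(a) = C_η(0) > C_η(α₀)`.
-/

theorem Crisk_sub_Crisk_neg (ℓ : ℝ → ℝ) (η α : ℝ) :
    Crisk ℓ η α - Crisk ℓ η (-α) = (2 * η - 1) * (ℓ α - ℓ (-α)) := by
  simp only [Crisk, neg_neg]
  ring

theorem continuous_Crisk {ℓ : ℝ → ℝ} (hcont : Continuous ℓ) (η : ℝ) :
    Continuous (Crisk ℓ η) := by
  unfold Crisk
  fun_prop

theorem bddBelow_range_Crisk {ℓ : ℝ → ℝ} (hbdd : BddBelow (Set.range ℓ)) {η : ℝ}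
    (hη₀ : 0 ≤ η) (hη₁ : η ≤ 1) : BddBelow (Set.range (Crisk ℓ η)) := by
  obtain ⟨b, hb⟩ := hbdd
  refine ⟨b, Set.forall_mem_range.2 fun α => ?_⟩
  have hα : b ≤ ℓ α := hb ⟨α, rfl⟩
  have hnα : b ≤ ℓ (-α) := hb ⟨-α, rfl⟩
  unfold Crisk
  nlinarith

theorem Crisk_eq_Crisk_zero_of_eq_neg {ℓ : ℝ → ℝ} (hanti : Antitone ℓ) (η : ℝ) {α : ℝ}
    (hα : α ≤ 0) (heq : ℓ α = ℓ (-α)) : Crisk ℓ η α = Crisk ℓ η 0 := by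
  have h₁ : ℓ 0 ≤ ℓ α := hanti hα
  have h₂ : ℓ (-α) ≤ ℓ 0 := hanti (neg_nonneg.2 hα)
  have hα0 : ℓ α = ℓ 0 := by linarith
  simp only [Crisk, neg_zero, ← heq, hα0]

theorem exists_Crisk_lt_of_nonpos {ℓ : ℝ → ℝ} (hanti : Antitone ℓ) {η : ℝ} (hη : 1 / 2 < η)
    {α₀ : ℝ} (hdrop : Crisk ℓ η α₀ < Crisk ℓ η 0) {α : ℝ} (hα : α ≤ 0) :
    ∃ β, Crisk ℓ η β < Crisk ℓ η α := by
  rcases (hanti (show α ≤ -α by linarith)).lt_or_eq with hlt | heq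
  · refine ⟨-α, sub_pos.1 ?_⟩
    rw [Crisk_sub_Crisk_neg]
    exact mul_pos (by linarith) (sub_pos.2 hlt)
  · exact ⟨α₀, Crisk_eq_Crisk_zero_of_eq_neg hanti η hα heq.symm ▸ hdrop⟩

/-- For a continuous, decreasing, bounded-below loss `ℓ`, `η > 1/2`, with global
conditional-risk infimum `m`, if `α₀ > 0` satisfies `C_η(α₀) < C_η(0)` then
`inf { C_η(α) : −α₀ ≤ α ≤ 0 } > m`. -/
theorem stmt19 (ℓ : ℝ → ℝ) (hcont : Continuous ℓ) (hanti : Antitone ℓ)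
    (hbdd : BddBelow (Set.range ℓ)) (η : ℝ) (hη : 1 / 2 < η) (hη1 : η ≤ 1)
    (m : ℝ) (hm : m = sInf (Set.range fun α => Crisk ℓ η α))
    (α₀ : ℝ) (hα₀ : 0 < α₀) (hdrop : Crisk ℓ η α₀ < Crisk ℓ η 0) :
    m < sInf {v | ∃ α : ℝ, -α₀ ≤ α ∧ α ≤ 0 ∧ v = Crisk ℓ η α} := by
  have hset : {v | ∃ α : ℝ, -α₀ ≤ α ∧ α ≤ 0 ∧ v = Crisk ℓ η α}
      = Crisk ℓ η '' Set.Icc (-α₀) 0 := by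
    ext v
    simp only [Set.mem_ofPred_eq, Set.mem_image, Set.mem_Icc, and_assoc, eq_comm]
  have hne : (Crisk ℓ η '' Set.Icc (-α₀) 0).Nonempty :=
    ⟨_, Set.mem_image_of_mem _ (Set.right_mem_Icc.2 (neg_nonpos.2 hα₀.le))⟩
  obtain ⟨a, ⟨-, ha⟩, hmin⟩ :=
    (isCompact_Icc.image (continuous_Crisk hcont η)).sInf_mem hne
  obtain ⟨β, hβ⟩ := exists_Crisk_lt_of_nonpos hanti hη hdrop ha
  rw [hset, ← hmin, hm]
  exact (csInf_le (bddBelow_range_Crisk hbdd (by linarith) hη1) ⟨β, rfl⟩).trans_lt hβ
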